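/- Well-posedness with interface unknowns and coarse-flux/fine-pressure matching: augment the one-dimensional composite finite volume scheme with additional interface unknowns p_{I+1/2}^{n,k} and p_{I+1/2}^{n}, interface fluxes u_{I+1/2}^{n,k} = (p_{I+1/2}^{n,k} − p_I^{n,k})/(x_{I+1/2} − x_I) and u_{I+1/2}^{n} = (p_{I+1}^{n} − p_{I+1/2}^{n})/(x_{I+1} − x_{I+1/2}), and interface conditions, for every n: δt₂ u_{I+1/2}^{n} = Σ_{k=1}^{𝒦} δt₁ u_{I+1/2}^{n,k} and p_{I+1/2}^{n,k} = p_{I+1/2}^{n} for all k. Then for every choice of sources f_j^{n,k}, f_j^{n} and initial values p_j^0, the resulting finite linear system has exactly one solution (p_j^{n,k} for j ≤ I, p_j^{n} for j > I, p_{I+1/2}^{n,k}, p_{I+1/2}^{n}). -/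

import Mathlib

open Finset

/-- Cell center `x_j = (x_{j-1/2} + x_{j+1/2})/2`, where `xh j` denotes `x_{j+1/2}`
(so `xh 0 = x_{1/2}`, …, `xh J = x_{J+1/2}`). -/
noncomputable def xc (xh : ℕ → ℝ) (j : ℕ) : ℝ := (xh (j - 1) + xh j) / 2

/-- Cell width `h_j = x_{j+1/2} − x_{j−1/2}`. -/
noncomputable def hw (xh : ℕ → ℝ) (j : ℕ) : ℝ := xh j - xh (j - 1)

/-- The previous fine-time value `p_j^{n,k−1}`, with the conventions
`p_j^{n,0} = p_j^{n−1,𝒦}` and `p_j^{1,0} = p_j^0`. -/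
def prevF (K : ℕ) (p0 : ℕ → ℝ) (p1 : ℕ → ℕ → ℕ → ℝ) (n k j : ℕ) : ℝ :=
  if k = 1 then (if n = 1 then p0 j else p1 (n - 1) K j) else p1 n (k - 1) j

/-- The previous coarse-time value `p_j^{n−1}`, with the convention `p_j^0 = p_j^0`. -/
def prevC (p0 : ℕ → ℝ) (p2 : ℕ → ℕ → ℝ) (n j : ℕ) : ℝ :=
  if n = 1 then p0 j else p2 (n - 1) j

/-- Fine fluxes `u_{j+1/2}^{n,k}` for face indices `j = 0,…,I`:
`u_{1/2}^{n,k} = p_1^{n,k}/(x_1 − x_{1/2})`,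
`u_{j+1/2}^{n,k} = (p_{j+1}^{n,k} − p_j^{n,k})/(x_{j+1} − x_j)` for `1 ≤ j < I`, and the
interface flux `u_{I+1/2}^{n,k} = (p_{I+1/2}^{n,k} − p_I^{n,k})/(x_{I+1/2} − x_I)`,
where `q1 n k` denotes the interface unknown `p_{I+1/2}^{n,k}`. -/
noncomputable def uF (I : ℕ) (xh : ℕ → ℝ) (p1 : ℕ → ℕ → ℕ → ℝ) (q1 : ℕ → ℕ → ℝ)
    (n k j : ℕ) : ℝ :=
  if j = 0 then p1 n k 1 / (xc xh 1 - xh 0)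
  else if j < I then (p1 n k (j + 1) - p1 n k j) / (xc xh (j + 1) - xc xh j)
  else (q1 n k - p1 n k I) / (xh I - xc xh I)

/-- Coarse fluxes `u_{j+1/2}^{n}` for face indices `j = I,…,J`:
the interface flux `u_{I+1/2}^{n} = (p_{I+1}^{n} − p_{I+1/2}^{n})/(x_{I+1} − x_{I+1/2})`
(where `q2 n` denotes the interface unknown `p_{I+1/2}^{n}`),
`u_{j+1/2}^{n} = (p_{j+1}^{n} − p_j^{n})/(x_{j+1} − x_j)` for `I < j < J`, and
`u_{J+1/2}^{n} = −p_J^{n}/(x_{J+1/2} − x_J)`. -/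
noncomputable def uC (I J : ℕ) (xh : ℕ → ℝ) (p2 : ℕ → ℕ → ℝ) (q2 : ℕ → ℝ)
    (n j : ℕ) : ℝ :=
  if j = J then -(p2 n J) / (xh J - xc xh J)
  else if I < j then (p2 n (j + 1) - p2 n j) / (xc xh (j + 1) - xc xh j)
  else (p2 n (I + 1) - q2 n) / (xc xh (I + 1) - xh I)

/-- The interior scheme equations of the one-dimensional composite finite volume scheme:
`(h_j/δt₁)(p_j^{n,k} − p_j^{n,k−1}) − (u_{j+1/2}^{n,k} − u_{j−1/2}^{n,k}) = h_j f_j^{n,k}`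
for `j = 1,…,I`, `n = 1,…,N₂`, `k = 1,…,𝒦`, and
`(h_j/δt₂)(p_j^{n} − p_j^{n−1}) − (u_{j+1/2}^{n} − u_{j−1/2}^{n}) = h_j f_j^{n}`
for `j = I+1,…,J`, `n = 1,…,N₂`. -/
def SchemeEqs (J I K N2 : ℕ) (δt1 δt2 : ℝ) (xh : ℕ → ℝ)
    (p0 : ℕ → ℝ) (f1 : ℕ → ℕ → ℕ → ℝ) (f2 : ℕ → ℕ → ℝ)
    (p1 : ℕ → ℕ → ℕ → ℝ) (p2 : ℕ → ℕ → ℝ) (q1 : ℕ → ℕ → ℝ) (q2 : ℕ → ℝ) : Prop :=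
  (∀ n ∈ Icc 1 N2, ∀ k ∈ Icc 1 K, ∀ j ∈ Icc 1 I,
      (hw xh j / δt1) * (p1 n k j - prevF K p0 p1 n k j)
        - (uF I xh p1 q1 n k j - uF I xh p1 q1 n k (j - 1)) = hw xh j * f1 n k j)
  ∧ (∀ n ∈ Icc 1 N2, ∀ j ∈ Icc (I + 1) J,
      (hw xh j / δt2) * (p2 n j - prevC p0 p2 n j)
        - (uC I J xh p2 q2 n j - uC I J xh p2 q2 n (j - 1)) = hw xh j * f2 n j)

/-- Interface conditions with interface unknowns and coarse-flux/fine-pressure matching: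
`δt₂ u_{I+1/2}^{n} = ∑_{k=1}^{𝒦} δt₁ u_{I+1/2}^{n,k}` and
`p_{I+1/2}^{n,k} = p_{I+1/2}^{n}` for all `k`. -/
def InterfaceCoarseFlux (J I K N2 : ℕ) (δt1 δt2 : ℝ) (xh : ℕ → ℝ)
    (p1 : ℕ → ℕ → ℕ → ℝ) (p2 : ℕ → ℕ → ℝ) (q1 : ℕ → ℕ → ℝ) (q2 : ℕ → ℝ) : Prop :=
  ∀ n ∈ Icc 1 N2,
    δt2 * uC I J xh p2 q2 n I = ∑ k ∈ Icc 1 K, δt1 * uF I xh p1 q1 n k I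
    ∧ ∀ k ∈ Icc 1 K, q1 n k = q2 n

/-! The homogeneous system has only the trivial solution, by a discrete energy estimate made
one coarse step at a time. Extending the cell pressures by the boundary and interface values
turns every flux into a two-point difference quotient, so summation by parts gives, for each
fine step and for the coarse step, kinetic terms `∑ h_j p_j (p_j - p_j^prev)` plus a
dissipation `δt ∑ (X_{j+1} - X_j) u_j²` equal to an interface term. Because
`p_{I+1/2}^{n,k} = p_{I+1/2}^{n}` and `δt₂ u_{I+1/2}^{n} = ∑_k δt₁ u_{I+1/2}^{n,k}`, the
interface terms cancel; the kinetic terms are nonnegative once the previous values vanish, so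
every flux vanishes and the Dirichlet boundary conditions force zero pressures. Existence then
follows because the system is square: injectivity implies surjectivity. -/

lemma sum_Icc_sub_pred_mul_add_sum_Icc_mul_sub (u P : ℕ → ℝ) {a b : ℕ} (hab : a ≤ b) :
    ∑ j ∈ Icc (a + 1) b, (u j - u (j - 1)) * P j + ∑ j ∈ Icc a b, u j * (P (j + 1) - P j)
      = u b * P (b + 1) - u a * P a := by
  induction b, hab using Nat.le_induction with
  | base => simp; ring
  | succ b hab ih =>
    rw [sum_Icc_succ_top (by omega), sum_Icc_succ_top (by omega), Nat.add_sub_cancel]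
    linear_combination ih

lemma sq_div_two_le_sum_mul_sub_pred (a : ℕ → ℝ) (h0 : a 0 = 0) (N : ℕ) :
    a N ^ 2 / 2 ≤ ∑ k ∈ Icc 1 N, a k * (a k - a (k - 1)) := by
  induction N with
  | zero => simp [h0]
  | succ N ih =>
    rw [sum_Icc_succ_top (by omega), Nat.add_sub_cancel]
    nlinarith [sq_nonneg (a (N + 1) - a N)]

def dissipation (X u : ℕ → ℝ) (a b : ℕ) : ℝ :=
  ∑ j ∈ Icc a b, (X (j + 1) - X j) * u j ^ 2

section Chain

variable {a b : ℕ} {X P u : ℕ → ℝ}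

lemma dissipation_nonneg (hX : ∀ j ∈ Icc a b, X j < X (j + 1)) : 0 ≤ dissipation X u a b :=
  sum_nonneg fun j hj => mul_nonneg (sub_nonneg.2 (hX j hj).le) (sq_nonneg _)

lemma eq_of_dissipation_eq_zero (hX : ∀ j ∈ Icc a b, X j < X (j + 1))
    (hu : ∀ j ∈ Icc a b, u j = (P (j + 1) - P j) / (X (j + 1) - X j))
    (hD : dissipation X u a b = 0) : ∀ j ∈ Icc a (b + 1), P j = P a := by
  have hstep : ∀ j ∈ Icc a b, P (j + 1) = P j := by
    intro j hj
    have hgap : X (j + 1) - X j ≠ 0 := (sub_pos.2 (hX j hj)).ne'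
    have hterm := (sum_eq_zero_iff_of_nonneg fun i hi =>
      mul_nonneg (sub_nonneg.2 (hX i hi).le) (sq_nonneg (u i))).1 hD j hj
    have hu0 : u j = 0 := by simpa [hgap] using hterm
    rw [hu j hj, div_eq_zero_iff, sub_eq_zero] at hu0
    exact hu0.resolve_right hgap
  intro j hj
  obtain ⟨haj, hjb⟩ := mem_Icc.1 hj
  induction j, haj using Nat.le_induction with
  | base => rfl
  | succ j haj ih =>
    rw [hstep j (mem_Icc.2 ⟨haj, by omega⟩), ih (mem_Icc.2 ⟨haj, by omega⟩) (by omega)]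

lemma chain_energy_identity (hab : a ≤ b) {δt : ℝ} (hδt : δt ≠ 0) {h p prev : ℕ → ℝ}
    (hP : ∀ j ∈ Icc (a + 1) b, P j = p j) (hX : ∀ j ∈ Icc a b, X j < X (j + 1))
    (hu : ∀ j ∈ Icc a b, u j = (P (j + 1) - P j) / (X (j + 1) - X j))
    (hs : ∀ j ∈ Icc (a + 1) b, h j / δt * (p j - prev j) - (u j - u (j - 1)) = 0) :
    ∑ j ∈ Icc (a + 1) b, h j * (p j * (p j - prev j)) + δt * dissipation X u a b
      = δt * (u b * P (b + 1) - u a * P a) := by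
  have hcell : ∀ j ∈ Icc (a + 1) b,
      h j * (p j * (p j - prev j)) = δt * ((u j - u (j - 1)) * P j) := by
    intro j hj
    rw [hP j hj, ← sub_eq_zero.1 (hs j hj)]
    field_simp
  have hface : ∀ j ∈ Icc a b, (X (j + 1) - X j) * u j ^ 2 = u j * (P (j + 1) - P j) := by
    intro j hj
    rw [hu j hj]
    field_simp [(sub_pos.2 (hX j hj)).ne']
  rw [sum_congr rfl hcell, dissipation, sum_congr rfl hface, ← mul_sum, ← mul_add,
    sum_Icc_sub_pred_mul_add_sum_Icc_mul_sub u P hab]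

end Chain

/- Node positions and pressures of the fine and coarse chains, extended by the boundary and
interface values, so that every flux `uF`, `uC` is a two-point difference quotient. -/

noncomputable def fineNode (xh : ℕ → ℝ) (I j : ℕ) : ℝ :=
  if j = 0 then xh 0 else if j ≤ I then xc xh j else xh I

noncomputable def coarseNode (xh : ℕ → ℝ) (I J j : ℕ) : ℝ :=
  if j ≤ I then xh I else if j ≤ J then xc xh j else xh J

def finePressure (I : ℕ) (p1 : ℕ → ℕ → ℕ → ℝ) (q1 : ℕ → ℕ → ℝ) (n k j : ℕ) : ℝ :=
  if j = 0 then 0 else if j ≤ I then p1 n k j else q1 n k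

def coarsePressure (I J : ℕ) (p2 : ℕ → ℕ → ℝ) (q2 : ℕ → ℝ) (n j : ℕ) : ℝ :=
  if j ≤ I then q2 n else if j ≤ J then p2 n j else 0

section Mesh

variable {I J : ℕ} {xh : ℕ → ℝ}

lemma uF_eq_div (hI : 1 ≤ I) (p1 : ℕ → ℕ → ℕ → ℝ) (q1 : ℕ → ℕ → ℝ) (n k : ℕ) {j : ℕ}
    (hj : j ≤ I) :
    uF I xh p1 q1 n k j = (finePressure I p1 q1 n k (j + 1) - finePressure I p1 q1 n k j)
      / (fineNode xh I (j + 1) - fineNode xh I j) := by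
  unfold uF finePressure fineNode
  rcases Nat.eq_zero_or_pos j with rfl | hj0
  · simp [hI]
  rcases hj.lt_or_eq with hjI | rfl
  · simp [hj0.ne', hjI, Nat.succ_le_of_lt hjI, hj]
  · simp [hj0.ne']

lemma uC_eq_div (hIJ : I < J) (p2 : ℕ → ℕ → ℝ) (q2 : ℕ → ℝ) (n : ℕ) {j : ℕ}
    (hIj : I ≤ j) (hjJ : j ≤ J) :
    uC I J xh p2 q2 n j = (coarsePressure I J p2 q2 n (j + 1) - coarsePressure I J p2 q2 n j)
      / (coarseNode xh I J (j + 1) - coarseNode xh I J j) := by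
  unfold uC coarsePressure coarseNode
  rcases hjJ.lt_or_eq with hjJ | rfl
  · rcases hIj.lt_or_eq with hIj | rfl
    · simp [hjJ.ne, hIj, hIj.not_ge, (hIj.trans (Nat.lt_succ_self j)).not_ge, hjJ.le,
        Nat.succ_le_of_lt hjJ]
    · simp [hjJ.ne, hIJ]
  · simp [hIJ.not_ge, hIJ.not_gt]

lemma hw_pos (hxh : ∀ j < J, xh j < xh (j + 1)) {j : ℕ} (hj : 1 ≤ j) (hjJ : j ≤ J) :
    0 < hw xh j := by
  have := hxh (j - 1) (by omega)
  rw [Nat.sub_add_cancel hj] at this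
  unfold hw; linarith

lemma fineNode_lt_succ (hxh : ∀ j < J, xh j < xh (j + 1)) (hI : 1 ≤ I) (hIJ : I ≤ J) {j : ℕ}
    (hj : j ≤ I) :
    fineNode xh I j < fineNode xh I (j + 1) := by
  unfold fineNode xc
  rcases Nat.eq_zero_or_pos j with rfl | hj0
  · have := hxh 0 (by omega)
    simp [hI]; linarith
  have h1 := hxh (j - 1) (by omega)
  rw [Nat.sub_add_cancel hj0] at h1
  rcases hj.lt_or_eq with hjI | rfl
  · have h2 := hxh j (by omega)
    simp [hj0.ne', Nat.succ_le_of_lt hjI, hj]; linarith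
  · simp [hj0.ne']; linarith

lemma coarseNode_lt_succ (hxh : ∀ j < J, xh j < xh (j + 1)) (hIJ : I < J) {j : ℕ}
    (hIj : I ≤ j) (hjJ : j ≤ J) :
    coarseNode xh I J j < coarseNode xh I J (j + 1) := by
  unfold coarseNode xc
  rcases hjJ.lt_or_eq with hjJ | rfl
  · have h2 := hxh j hjJ
    rcases hIj.lt_or_eq with hIj | rfl
    · have h1 := hxh (j - 1) (by omega)
      rw [Nat.sub_add_cancel (by omega)] at h1
      simp [hIj.not_ge, (hIj.trans (Nat.lt_succ_self j)).not_ge, hjJ.le,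
        Nat.succ_le_of_lt hjJ]
      linarith
    · simp [hIJ]; linarith
  · have h1 := hxh (j - 1) (by omega)
    rw [Nat.sub_add_cancel (by omega)] at h1
    simp [hIJ.not_ge, hIJ.not_gt]; linarith

end Mesh

section Energy

variable {I J : ℕ} {xh : ℕ → ℝ} {p1 : ℕ → ℕ → ℕ → ℝ} {q1 : ℕ → ℕ → ℝ}
  {p2 : ℕ → ℕ → ℝ} {q2 : ℕ → ℝ} {n : ℕ}

lemma fine_energy_identity (hxh : ∀ j < J, xh j < xh (j + 1)) (hI : 1 ≤ I) (hIJ : I ≤ J)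
    {δt : ℝ} (hδt : δt ≠ 0) {k : ℕ} {prev : ℕ → ℝ}
    (hs : ∀ j ∈ Icc 1 I, hw xh j / δt * (p1 n k j - prev j)
      - (uF I xh p1 q1 n k j - uF I xh p1 q1 n k (j - 1)) = 0) :
    ∑ j ∈ Icc 1 I, hw xh j * (p1 n k j * (p1 n k j - prev j))
      + δt * dissipation (fineNode xh I) (uF I xh p1 q1 n k) 0 I
      = δt * uF I xh p1 q1 n k I * q1 n k := by
  have hP : ∀ j ∈ Icc (0 + 1) I, finePressure I p1 q1 n k j = p1 n k j := fun j hj => by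
    obtain ⟨hj1, hjI⟩ := mem_Icc.1 hj
    simp [finePressure, hjI, Nat.one_le_iff_ne_zero.1 hj1]
  rw [chain_energy_identity (X := fineNode xh I) (u := uF I xh p1 q1 n k) (Nat.zero_le I) hδt hP
    (fun j hj => fineNode_lt_succ hxh hI hIJ (mem_Icc.1 hj).2)
    (fun j hj => uF_eq_div hI p1 q1 n k (mem_Icc.1 hj).2) hs]
  simp [finePressure]
  ring

lemma coarse_energy_identity (hxh : ∀ j < J, xh j < xh (j + 1)) (hIJ : I < J)
    {δt : ℝ} (hδt : δt ≠ 0) {prev : ℕ → ℝ}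
    (hs : ∀ j ∈ Icc (I + 1) J, hw xh j / δt * (p2 n j - prev j)
      - (uC I J xh p2 q2 n j - uC I J xh p2 q2 n (j - 1)) = 0) :
    ∑ j ∈ Icc (I + 1) J, hw xh j * (p2 n j * (p2 n j - prev j))
      + δt * dissipation (coarseNode xh I J) (uC I J xh p2 q2 n) I J
      = -(δt * uC I J xh p2 q2 n I * q2 n) := by
  have hP : ∀ j ∈ Icc (I + 1) J, coarsePressure I J p2 q2 n j = p2 n j := fun j hj => by
    obtain ⟨hIj, hjJ⟩ := mem_Icc.1 hj
    simp [coarsePressure, hjJ, Nat.lt_iff_add_one_le.2 hIj |>.not_ge]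
  rw [chain_energy_identity (X := coarseNode xh I J) (u := uC I J xh p2 q2 n) hIJ.le hδt hP
    (fun j hj => coarseNode_lt_succ hxh hIJ (mem_Icc.1 hj).1 (mem_Icc.1 hj).2)
    (fun j hj => uC_eq_div hIJ p2 q2 n (mem_Icc.1 hj).1 (mem_Icc.1 hj).2) hs]
  simp [coarsePressure, hIJ.not_gt]
  ring

lemma fine_eq_zero_of_dissipation_eq_zero (hxh : ∀ j < J, xh j < xh (j + 1)) (hI : 1 ≤ I)
    (hIJ : I ≤ J) {k : ℕ} (hD : dissipation (fineNode xh I) (uF I xh p1 q1 n k) 0 I = 0) :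
    (∀ j ∈ Icc 1 I, p1 n k j = 0) ∧ q1 n k = 0 := by
  have hP := eq_of_dissipation_eq_zero (X := fineNode xh I) (P := finePressure I p1 q1 n k)
    (fun j hj => fineNode_lt_succ hxh hI hIJ (mem_Icc.1 hj).2)
    (fun j hj => uF_eq_div hI p1 q1 n k (mem_Icc.1 hj).2) hD
  refine ⟨fun j hj => ?_, ?_⟩
  · obtain ⟨hj1, hjI⟩ := mem_Icc.1 hj
    simpa [finePressure, hjI, Nat.one_le_iff_ne_zero.1 hj1] using hP j (by simp; omega)
  · simpa [finePressure] using hP (I + 1) (by simp)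

lemma coarse_eq_zero_of_dissipation_eq_zero (hxh : ∀ j < J, xh j < xh (j + 1)) (hIJ : I < J)
    (hD : dissipation (coarseNode xh I J) (uC I J xh p2 q2 n) I J = 0) :
    (∀ j ∈ Icc (I + 1) J, p2 n j = 0) ∧ q2 n = 0 := by
  have hP := eq_of_dissipation_eq_zero (X := coarseNode xh I J) (P := coarsePressure I J p2 q2 n)
    (fun j hj => coarseNode_lt_succ hxh hIJ (mem_Icc.1 hj).1 (mem_Icc.1 hj).2)
    (fun j hj => uC_eq_div hIJ p2 q2 n (mem_Icc.1 hj).1 (mem_Icc.1 hj).2) hD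
  have hq2 : q2 n = 0 := by
    simpa [coarsePressure, hIJ.not_ge, hIJ.le] using (hP (J + 1) (by simp; omega)).symm
  refine ⟨fun j hj => ?_, hq2⟩
  obtain ⟨hIj, hjJ⟩ := mem_Icc.1 hj
  simpa [coarsePressure, hjJ, Nat.lt_iff_add_one_le.2 hIj |>.not_ge, hq2]
    using hP j (by simp; omega)

end Energy

lemma sum_fine_kinetic_nonneg {I K n : ℕ} {h : ℕ → ℝ} {p1 : ℕ → ℕ → ℕ → ℝ}
    (hh : ∀ j ∈ Icc 1 I, 0 ≤ h j) (hprev : ∀ j ∈ Icc 1 I, prevF K (fun _ => 0) p1 n 1 j = 0) :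
    0 ≤ ∑ k ∈ Icc 1 K, ∑ j ∈ Icc 1 I,
      h j * (p1 n k j * (p1 n k j - prevF K (fun _ => 0) p1 n k j)) := by
  rw [sum_comm]
  refine sum_nonneg fun j hj => ?_
  rw [← mul_sum]
  refine mul_nonneg (hh j hj) ?_
  set a : ℕ → ℝ := fun k => if k = 0 then 0 else p1 n k j
  have ha : ∀ k ∈ Icc 1 K,
      p1 n k j * (p1 n k j - prevF K (fun _ => 0) p1 n k j) = a k * (a k - a (k - 1)) := by
    intro k hk
    obtain ⟨hk1, -⟩ := mem_Icc.1 hk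
    rcases hk1.eq_or_lt with rfl | hk1
    · simp [a, hprev j hj]
    · have hk0 : k ≠ 0 := by omega
      have hk0' : k - 1 ≠ 0 := by omega
      simp [a, prevF, hk1.ne', hk0, hk0']
  rw [sum_congr rfl ha]
  exact (div_nonneg (sq_nonneg _) zero_le_two).trans (sq_div_two_le_sum_mul_sub_pred a rfl K)

section Homogeneous

variable {J I K N2 : ℕ} {δt1 δt2 : ℝ} {xh : ℕ → ℝ} {p1 : ℕ → ℕ → ℕ → ℝ} {p2 : ℕ → ℕ → ℝ}
  {q1 : ℕ → ℕ → ℝ} {q2 : ℕ → ℝ}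

lemma step_eq_zero_of_prev_eq_zero (hxh : ∀ j < J, xh j < xh (j + 1)) (hI : 1 ≤ I)
    (hIJ : I < J) (hδt1 : 0 < δt1) (hδt2 : 0 < δt2)
    (hS : SchemeEqs J I K N2 δt1 δt2 xh (fun _ => 0) (fun _ _ _ => 0) (fun _ _ => 0)
      p1 p2 q1 q2)
    (hIF : InterfaceCoarseFlux J I K N2 δt1 δt2 xh p1 p2 q1 q2) {n : ℕ} (hn : n ∈ Icc 1 N2)
    (hprevF : ∀ j ∈ Icc 1 I, prevF K (fun _ => 0) p1 n 1 j = 0)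
    (hprevC : ∀ j ∈ Icc (I + 1) J, prevC (fun _ => 0) p2 n j = 0) :
    (∀ k ∈ Icc 1 K, (∀ j ∈ Icc 1 I, p1 n k j = 0) ∧ q1 n k = 0)
      ∧ (∀ j ∈ Icc (I + 1) J, p2 n j = 0) ∧ q2 n = 0 := by
  obtain ⟨hflux, hmatch⟩ := hIF n hn
  set DF : ℕ → ℝ := fun k => dissipation (fineNode xh I) (uF I xh p1 q1 n k) 0 I
  set DC := dissipation (coarseNode xh I J) (uC I J xh p2 q2 n) I J
  have hfine : ∀ k ∈ Icc 1 K,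
      ∑ j ∈ Icc 1 I, hw xh j * (p1 n k j * (p1 n k j - prevF K (fun _ => 0) p1 n k j))
        + δt1 * DF k = δt1 * uF I xh p1 q1 n k I * q2 n := fun k hk => by
    rw [← hmatch k hk]
    exact fine_energy_identity hxh hI hIJ.le hδt1.ne'
      fun j hj => (hS.1 n hn k hk j hj).trans (mul_zero _)
  have hcoarse := coarse_energy_identity hxh hIJ hδt2.ne'
    fun j hj => (hS.2 n hn j hj).trans (mul_zero _)
  have hEF := sum_fine_kinetic_nonneg (K := K) (fun j hj => (hw_pos hxh (mem_Icc.1 hj).1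
    (by have := (mem_Icc.1 hj).2; omega)).le) hprevF
  have hEC : 0 ≤ ∑ j ∈ Icc (I + 1) J,
      hw xh j * (p2 n j * (p2 n j - prevC (fun _ => 0) p2 n j)) := sum_nonneg fun j hj => by
    rw [hprevC j hj, sub_zero]
    exact mul_nonneg (hw_pos hxh (by have := (mem_Icc.1 hj).1; omega) (mem_Icc.1 hj).2).le
      (mul_self_nonneg _)
  have hbalance := congrArg₂ (· + ·) (sum_congr rfl hfine) hcoarse
  simp only [sum_add_distrib, ← mul_sum, ← sum_mul, ← hflux] at hbalance
  have hDF_nonneg : ∀ k ∈ Icc 1 K, 0 ≤ DF k := fun k _ =>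
    dissipation_nonneg fun j hj => fineNode_lt_succ hxh hI hIJ.le (mem_Icc.1 hj).2
  have hDF : 0 ≤ ∑ k ∈ Icc 1 K, DF k := sum_nonneg hDF_nonneg
  have hDC : 0 ≤ DC :=
    dissipation_nonneg fun j hj => coarseNode_lt_succ hxh hIJ (mem_Icc.1 hj).1 (mem_Icc.1 hj).2
  have hDF0 : ∑ k ∈ Icc 1 K, DF k = 0 := by
    nlinarith [mul_nonneg hδt1.le hDF, mul_nonneg hδt2.le hDC]
  have hDC0 : DC = 0 := by
    nlinarith [mul_nonneg hδt1.le hDF, mul_nonneg hδt2.le hDC]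
  exact ⟨fun k hk => fine_eq_zero_of_dissipation_eq_zero hxh hI hIJ.le
    ((sum_eq_zero_iff_of_nonneg hDF_nonneg).1 hDF0 k hk),
    coarse_eq_zero_of_dissipation_eq_zero hxh hIJ hDC0⟩

theorem homogeneous_solution_eq_zero (hxh : ∀ j < J, xh j < xh (j + 1)) (hI : 1 ≤ I)
    (hIJ : I < J) (hK : 1 ≤ K) (hδt1 : 0 < δt1) (hδt2 : 0 < δt2)
    (hS : SchemeEqs J I K N2 δt1 δt2 xh (fun _ => 0) (fun _ _ _ => 0) (fun _ _ => 0)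
      p1 p2 q1 q2)
    (hIF : InterfaceCoarseFlux J I K N2 δt1 δt2 xh p1 p2 q1 q2) :
    ∀ n ∈ Icc 1 N2, (∀ k ∈ Icc 1 K, (∀ j ∈ Icc 1 I, p1 n k j = 0) ∧ q1 n k = 0)
      ∧ (∀ j ∈ Icc (I + 1) J, p2 n j = 0) ∧ q2 n = 0 := by
  intro n hn
  induction n with
  | zero => simp at hn
  | succ n ih =>
    have ih' : 1 ≤ n → _ := fun hn0 => ih (mem_Icc.2 ⟨hn0, by have := (mem_Icc.1 hn).2; omega⟩)
    refine step_eq_zero_of_prev_eq_zero hxh hI hIJ hδt1 hδt2 hS hIF hn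
      (fun j hj => ?_) (fun j hj => ?_)
    · rcases Nat.eq_zero_or_pos n with rfl | hn0
      · simp [prevF]
      · simpa [prevF, hn0.ne'] using ((ih' hn0).1 K (mem_Icc.2 ⟨hK, le_rfl⟩)).1 j hj
    · rcases Nat.eq_zero_or_pos n with rfl | hn0
      · simp [prevC]
      · simpa [prevC, hn0.ne'] using (ih' hn0).2.1 j hj

end Homogeneous

section Linearity

variable {I J K : ℕ} {xh : ℕ → ℝ} (c : ℝ) (p p' : ℕ → ℕ → ℕ → ℝ) (q q' : ℕ → ℕ → ℝ)
  (r r' : ℕ → ℕ → ℝ) (s s' : ℕ → ℝ) (n k j : ℕ)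

lemma uF_add : uF I xh (p + p') (q + q') n k j = uF I xh p q n k j + uF I xh p' q' n k j := by
  unfold uF; split_ifs <;> simp only [Pi.add_apply] <;> ring

lemma uF_smul : uF I xh (c • p) (c • q) n k j = c * uF I xh p q n k j := by
  unfold uF; split_ifs <;> simp only [Pi.smul_apply, smul_eq_mul] <;> ring

lemma uC_add : uC I J xh (r + r') (s + s') n j = uC I J xh r s n j + uC I J xh r' s' n j := by
  unfold uC; split_ifs <;> simp only [Pi.add_apply] <;> ring

lemma uC_smul : uC I J xh (c • r) (c • s) n j = c * uC I J xh r s n j := by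
  unfold uC; split_ifs <;> simp only [Pi.smul_apply, smul_eq_mul] <;> ring

lemma prevF_add :
    prevF K (fun _ => 0) (p + p') n k j
      = prevF K (fun _ => 0) p n k j + prevF K (fun _ => 0) p' n k j := by
  unfold prevF; split_ifs <;> simp

lemma prevF_smul : prevF K (fun _ => 0) (c • p) n k j = c * prevF K (fun _ => 0) p n k j := by
  unfold prevF; split_ifs <;> simp

lemma prevC_add :
    prevC (fun _ => 0) (r + r') n j = prevC (fun _ => 0) r n j + prevC (fun _ => 0) r' n j := by
  unfold prevC; split_ifs <;> simp

lemma prevC_smul : prevC (fun _ => 0) (c • r) n j = c * prevC (fun _ => 0) r n j := by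
  unfold prevC; split_ifs <;> simp

end Linearity

lemma prevF_eq_add (K : ℕ) (p0 : ℕ → ℝ) (p1 : ℕ → ℕ → ℕ → ℝ) (n k j : ℕ) :
    prevF K p0 p1 n k j = prevF K (fun _ => 0) p1 n k j + prevF K p0 0 n k j := by
  unfold prevF; split_ifs <;> simp

lemma prevC_eq_add (p0 : ℕ → ℝ) (p2 : ℕ → ℕ → ℝ) (n j : ℕ) :
    prevC p0 p2 n j = prevC (fun _ => 0) p2 n j + prevC p0 0 n j := by
  unfold prevC; split_ifs <;> simp

theorem exists_solution_of_uniqueness {𝕜 V W E : Type*} [DivisionRing 𝕜] [AddCommGroup V]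
    [Module 𝕜 V] [AddCommGroup W] [Module 𝕜 W] [AddCommGroup E] [Module 𝕜 E]
    [FiniteDimensional 𝕜 E] (L : V →ₗ[𝕜] W) (ρ : V →ₗ[𝕜] E) (σ : W →ₗ[𝕜] E) (ε : E →ₗ[𝕜] V)
    (hε : ∀ e, ρ (ε e) = e) (huniq : ∀ v, σ (L v) = 0 → ρ v = 0) (b : E) :
    ∃ v, σ (L v) = b := by
  have hinj : Function.Injective (σ ∘ₗ L ∘ₗ ε) := by
    refine (injective_iff_map_eq_zero _).2 fun e he => ?_
    simpa [hε] using huniq (ε e) he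
  obtain ⟨e, he⟩ := LinearMap.injective_iff_surjective.1 hinj b
  exact ⟨ε e, he⟩

abbrev Unknowns : Type := (ℕ → ℕ → ℕ → ℝ) × (ℕ → ℕ → ℝ) × (ℕ → ℕ → ℝ) × (ℕ → ℝ)

/- Left-hand sides of the scheme with zero data. Each equation is indexed like one unknown
(fine cells `(n, k, j)`, coarse cells `(n, j)`, pressure matching `(n, k)` like `q1`, flux
matching `n` like `q2`), so that the restricted system is square. -/
noncomputable def schemeResidual (J I K : ℕ) (δt1 δt2 : ℝ) (xh : ℕ → ℝ) :
    Unknowns →ₗ[ℝ] Unknowns where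
  toFun v :=
    (fun n k j => hw xh j / δt1 * (v.1 n k j - prevF K (fun _ => 0) v.1 n k j)
        - (uF I xh v.1 v.2.2.1 n k j - uF I xh v.1 v.2.2.1 n k (j - 1)),
      fun n j => hw xh j / δt2 * (v.2.1 n j - prevC (fun _ => 0) v.2.1 n j)
        - (uC I J xh v.2.1 v.2.2.2 n j - uC I J xh v.2.1 v.2.2.2 n (j - 1)),
      fun n k => v.2.2.1 n k - v.2.2.2 n,
      fun n => δt2 * uC I J xh v.2.1 v.2.2.2 n I - ∑ k ∈ Icc 1 K, δt1 * uF I xh v.1 v.2.2.1 n k I)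
  map_add' v w := by
    ext <;> simp only [Prod.fst_add, Prod.snd_add, Pi.add_apply, uF_add, uC_add, prevF_add,
      prevC_add, mul_add, sum_add_distrib] <;> ring
  map_smul' c v := by
    ext <;> simp only [Prod.smul_fst, Prod.smul_snd, Pi.smul_apply, smul_eq_mul, uF_smul,
      uC_smul, prevF_smul, prevC_smul, RingHom.id_apply, mul_left_comm δt1 c, ← mul_sum] <;> ring

noncomputable def schemeSource (K : ℕ) (δt1 δt2 : ℝ) (xh p0 : ℕ → ℝ) (f1 : ℕ → ℕ → ℕ → ℝ)
    (f2 : ℕ → ℕ → ℝ) : Unknowns :=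
  (fun n k j => hw xh j * f1 n k j + hw xh j / δt1 * prevF K p0 0 n k j,
    fun n j => hw xh j * f2 n j + hw xh j / δt2 * prevC p0 0 n j, 0, 0)

abbrev Restricted (J I K N2 : ℕ) : Type :=
  (Icc 1 N2 ×ˢ Icc 1 K ×ˢ Icc 1 I → ℝ) × (Icc 1 N2 ×ˢ Icc (I + 1) J → ℝ)
    × (Icc 1 N2 ×ˢ Icc 1 K → ℝ) × (Icc 1 N2 → ℝ)

def restrictToIndices (J I K N2 : ℕ) : Unknowns →ₗ[ℝ] Restricted J I K N2 where
  toFun v := (fun x => v.1 x.1.1 x.1.2.1 x.1.2.2, fun x => v.2.1 x.1.1 x.1.2,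
    fun x => v.2.2.1 x.1.1 x.1.2, fun x => v.2.2.2 x.1)
  map_add' _ _ := rfl
  map_smul' _ _ := rfl

noncomputable def extendFromIndices (J I K N2 : ℕ) : Restricted J I K N2 →ₗ[ℝ] Unknowns where
  toFun w :=
    (fun n k j => if h : (n, k, j) ∈ Icc 1 N2 ×ˢ Icc 1 K ×ˢ Icc 1 I then w.1 ⟨_, h⟩ else 0,
      fun n j => if h : (n, j) ∈ Icc 1 N2 ×ˢ Icc (I + 1) J then w.2.1 ⟨_, h⟩ else 0,
      fun n k => if h : (n, k) ∈ Icc 1 N2 ×ˢ Icc 1 K then w.2.2.1 ⟨_, h⟩ else 0,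
      fun n => if h : n ∈ Icc 1 N2 then w.2.2.2 ⟨_, h⟩ else 0)
  map_add' _ _ := by
    ext <;> simp only [Prod.fst_add, Prod.snd_add, Pi.add_apply] <;> split_ifs <;> simp
  map_smul' _ _ := by
    ext <;> simp only [Prod.smul_fst, Prod.smul_snd, Pi.smul_apply] <;> split_ifs <;> simp

lemma restrict_extendFromIndices (J I K N2 : ℕ) (w : Restricted J I K N2) :
    restrictToIndices J I K N2 (extendFromIndices J I K N2 w) = w := by
  ext ⟨x, hx⟩ <;> exact dif_pos hx

lemma restrict_eq_restrict_iff {J I K N2 : ℕ} {v v' : Unknowns} :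
    restrictToIndices J I K N2 v = restrictToIndices J I K N2 v' ↔ ∀ n ∈ Icc 1 N2,
      (∀ k ∈ Icc 1 K, (∀ j ∈ Icc 1 I, v.1 n k j = v'.1 n k j) ∧ v.2.2.1 n k = v'.2.2.1 n k)
        ∧ (∀ j ∈ Icc (I + 1) J, v.2.1 n j = v'.2.1 n j) ∧ v.2.2.2 n = v'.2.2.2 n := by
  simp only [restrictToIndices, LinearMap.coe_mk, AddHom.coe_mk, Prod.ext_iff, funext_iff,
    Subtype.forall, mem_product, Prod.forall, and_imp, imp_and, forall_and]
  tauto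

lemma schemeEqs_and_interface_iff {J I K N2 : ℕ} {δt1 δt2 : ℝ} {xh p0 : ℕ → ℝ}
    {f1 : ℕ → ℕ → ℕ → ℝ} {f2 : ℕ → ℕ → ℝ} {p1 : ℕ → ℕ → ℕ → ℝ} {p2 q1 : ℕ → ℕ → ℝ}
    {q2 : ℕ → ℝ} :
    SchemeEqs J I K N2 δt1 δt2 xh p0 f1 f2 p1 p2 q1 q2
        ∧ InterfaceCoarseFlux J I K N2 δt1 δt2 xh p1 p2 q1 q2
      ↔ restrictToIndices J I K N2 (schemeResidual J I K δt1 δt2 xh (p1, p2, q1, q2))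
        = restrictToIndices J I K N2 (schemeSource K δt1 δt2 xh p0 f1 f2) := by
  have move : ∀ a x y z d e : ℝ, a * (x - (y + z)) - d = e ↔ a * (x - y) - d = e + a * z :=
    fun _ _ _ _ _ _ => ⟨fun h => by linear_combination h, fun h => by linear_combination h⟩
  rw [restrict_eq_restrict_iff]
  simp only [SchemeEqs, InterfaceCoarseFlux, schemeResidual, schemeSource, LinearMap.coe_mk,
    AddHom.coe_mk, prevF_eq_add K p0 p1, prevC_eq_add p0 p2, move, Pi.zero_apply, sub_eq_zero,
    imp_and, forall_and]
  tauto

lemma schemeSource_zero (K : ℕ) (δt1 δt2 : ℝ) (xh : ℕ → ℝ) :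
    schemeSource K δt1 δt2 xh (fun _ => 0) (fun _ _ _ => 0) (fun _ _ => 0) = 0 := by
  ext <;> simp [schemeSource, prevF, prevC]

lemma restrict_eq_zero_of_restrict_schemeResidual_eq_zero {J I K N2 : ℕ} {δt1 δt2 : ℝ}
    {xh : ℕ → ℝ} (hxh : ∀ j < J, xh j < xh (j + 1)) (hI : 1 ≤ I) (hIJ : I < J) (hK : 1 ≤ K)
    (hδt1 : 0 < δt1) (hδt2 : 0 < δt2) (v : Unknowns)
    (hv : restrictToIndices J I K N2 (schemeResidual J I K δt1 δt2 xh v) = 0) :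
    restrictToIndices J I K N2 v = 0 := by
  obtain ⟨p1, p2, q1, q2⟩ := v
  obtain ⟨hS, hIF⟩ := schemeEqs_and_interface_iff.2 (hv.trans (by rw [schemeSource_zero, map_zero]))
  rw [← map_zero (restrictToIndices J I K N2), restrict_eq_restrict_iff]
  simpa using homogeneous_solution_eq_zero hxh hI hIJ hK hδt1 hδt2 hS hIF

theorem wellposed_interface_unknowns_coarse_flux_general
    (J I K N2 : ℕ) (hI1 : 1 ≤ I) (hIJ : I < J) (hK : 1 ≤ K)
    (δt1 : ℝ) (hδt1 : 0 < δt1) (δt2 : ℝ) (hδt2 : δt2 = (K : ℝ) * δt1)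
    (xh : ℕ → ℝ) (hxmono : ∀ j < J, xh j < xh (j + 1))
    (p0 : ℕ → ℝ) (f1 : ℕ → ℕ → ℕ → ℝ) (f2 : ℕ → ℕ → ℝ) :
    (∃ p1 p2 q1 q2,
        SchemeEqs J I K N2 δt1 δt2 xh p0 f1 f2 p1 p2 q1 q2
        ∧ InterfaceCoarseFlux J I K N2 δt1 δt2 xh p1 p2 q1 q2)
    ∧ ∀ p1 p2 q1 q2 p1' p2' q1' q2',
        SchemeEqs J I K N2 δt1 δt2 xh p0 f1 f2 p1 p2 q1 q2 →
        InterfaceCoarseFlux J I K N2 δt1 δt2 xh p1 p2 q1 q2 →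
        SchemeEqs J I K N2 δt1 δt2 xh p0 f1 f2 p1' p2' q1' q2' →
        InterfaceCoarseFlux J I K N2 δt1 δt2 xh p1' p2' q1' q2' →
        ∀ n ∈ Icc 1 N2,
          (∀ k ∈ Icc 1 K, (∀ j ∈ Icc 1 I, p1 n k j = p1' n k j) ∧ q1 n k = q1' n k)
          ∧ (∀ j ∈ Icc (I + 1) J, p2 n j = p2' n j) ∧ q2 n = q2' n := by
  have hδt2_pos : 0 < δt2 := hδt2 ▸ mul_pos (Nat.cast_pos.2 hK) hδt1
  have huniq := restrict_eq_zero_of_restrict_schemeResidual_eq_zero (N2 := N2) hxmono hI1 hIJ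
    hK hδt1 hδt2_pos
  refine ⟨?_, fun p1 p2 q1 q2 p1' p2' q1' q2' hS hIF hS' hIF' => ?_⟩
  · obtain ⟨⟨p1, p2, q1, q2⟩, hv⟩ := exists_solution_of_uniqueness _ _ _
      (extendFromIndices J I K N2) (restrict_extendFromIndices J I K N2) huniq
      (restrictToIndices J I K N2 (schemeSource K δt1 δt2 xh p0 f1 f2))
    exact ⟨p1, p2, q1, q2, schemeEqs_and_interface_iff.2 hv⟩
  · have h := (schemeEqs_and_interface_iff.1 ⟨hS, hIF⟩).trans
      (schemeEqs_and_interface_iff.1 ⟨hS', hIF'⟩).symm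
    rw [← sub_eq_zero, ← map_sub, ← map_sub] at h
    have hdiff := huniq _ h
    rw [map_sub, sub_eq_zero] at hdiff
    exact restrict_eq_restrict_iff.1 hdiff

/-- Well-posedness with interface unknowns and coarse-flux/fine-pressure matching:
for every choice of sources and initial values, the resulting finite linear system has
exactly one solution `(p_j^{n,k}` for `j ≤ I`, `p_j^{n}` for `j > I`, `p_{I+1/2}^{n,k}`,
`p_{I+1/2}^{n})`. -/
theorem wellposed_interface_unknowns_coarse_flux
    (J I K N2 : ℕ) (hJ : 3 ≤ J) (hI1 : 1 ≤ I) (hIJ : I < J) (hK : 1 ≤ K) (hN2 : 1 ≤ N2)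
    (δt1 : ℝ) (hδt1 : 0 < δt1) (δt2 : ℝ) (hδt2 : δt2 = (K : ℝ) * δt1)
    (xh : ℕ → ℝ) (hx0 : xh 0 = 0) (hxmono : ∀ j < J, xh j < xh (j + 1))
    (p0 : ℕ → ℝ) (f1 : ℕ → ℕ → ℕ → ℝ) (f2 : ℕ → ℕ → ℝ) :
    (∃ p1 p2 q1 q2,
        SchemeEqs J I K N2 δt1 δt2 xh p0 f1 f2 p1 p2 q1 q2
        ∧ InterfaceCoarseFlux J I K N2 δt1 δt2 xh p1 p2 q1 q2)
    ∧ ∀ p1 p2 q1 q2 p1' p2' q1' q2',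
        SchemeEqs J I K N2 δt1 δt2 xh p0 f1 f2 p1 p2 q1 q2 →
        InterfaceCoarseFlux J I K N2 δt1 δt2 xh p1 p2 q1 q2 →
        SchemeEqs J I K N2 δt1 δt2 xh p0 f1 f2 p1' p2' q1' q2' →
        InterfaceCoarseFlux J I K N2 δt1 δt2 xh p1' p2' q1' q2' →
        ∀ n ∈ Icc 1 N2,
          (∀ k ∈ Icc 1 K, (∀ j ∈ Icc 1 I, p1 n k j = p1' n k j) ∧ q1 n k = q1' n k)
          ∧ (∀ j ∈ Icc (I + 1) J, p2 n j = p2' n j) ∧ q2 n = q2' n :=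
  wellposed_interface_unknowns_coarse_flux_general J I K N2 hI1 hIJ hK δt1 hδt1 δt2 hδt2 xh hxmono
    p0 f1 f2
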